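/- For every nonnegative integer n, every nonnegative integer r, and every real x, the extended r-central Bell polynomial satisfies B_n^{(c,r)}(x) = ∑_{k=0}^{n} x^k · (1/k!) (δ^k (y ↦ y^n))(r), where δ^k is the k-th iterate of the central difference operator. -/

import Mathlib

/-!
The central difference is a forward difference recentred by half a step,
`δ f (x) = Δ f (x - 1/2)`; since `Δ` commutes with translations, `δ^k f (x) = Δ^k f (x - k/2)`.
Newton's formula `Δ^k f (y) = ∑_j (-1)^(k-j) C(k,j) f (y + j)` at `y = r - k/2` is then, for
`f = (· ^ n)`, exactly `k! · T_r(n+r, k+r)`.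
-/

/-- The central difference operator: `(δ f)(x) = f(x + 1/2) - f(x - 1/2)`. -/
noncomputable def cdiff (f : ℝ → ℝ) : ℝ → ℝ := fun x => f (x + 1 / 2) - f (x - 1 / 2)

/-- The extended `r`-central factorial numbers of the second kind:
`T_r(n+r,k+r) = (1/k!) ∑_{j=0}^{k} (-1)^{k-j} C(k,j) (j + r - k/2)^n`. -/
noncomputable def rcentralT (r n k : ℕ) : ℝ :=
  (1 / (Nat.factorial k : ℝ)) * ∑ j ∈ Finset.range (k + 1),
    (-1 : ℝ) ^ (k - j) * (Nat.choose k j : ℝ) * ((j : ℝ) + (r : ℝ) - (k : ℝ) / 2) ^ n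

/-- The extended `r`-central Bell polynomials: `B_n^{(c,r)}(x) = ∑_{k=0}^{n} T_r(n+r,k+r) x^k`. -/
noncomputable def rcentralBell (r n : ℕ) (x : ℝ) : ℝ :=
  ∑ k ∈ Finset.range (n + 1), rcentralT r n k * x ^ k

-- The shift is written `x + m` to match `fwdDiff_iter_comp_add`.
lemma cdiff_eq_fwdDiff (f : ℝ → ℝ) : cdiff f = fun x => fwdDiff 1 f (x + -(1 / 2)) := by
  ext x
  simp only [cdiff, fwdDiff]
  ring_nf

lemma cdiff_iterate_apply (f : ℝ → ℝ) (k : ℕ) (x : ℝ) :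
    cdiff^[k] f x = (fwdDiff 1)^[k] f (x - k / 2) := by
  induction k generalizing f x with
  | zero => simp
  | succ k ih =>
    rw [Function.iterate_succ_apply, Function.iterate_succ_apply, ih, cdiff_eq_fwdDiff,
      fwdDiff_iter_comp_add]
    exact congrArg _ (by push_cast; ring)

lemma cdiff_iterate_pow_apply (n k : ℕ) (x : ℝ) :
    cdiff^[k] (fun y : ℝ => y ^ n) x =
      ∑ j ∈ Finset.range (k + 1),
        (-1 : ℝ) ^ (k - j) * (Nat.choose k j : ℝ) * ((j : ℝ) + x - (k : ℝ) / 2) ^ n := by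
  rw [cdiff_iterate_apply, fwdDiff_iter_eq_sum_shift]
  refine Finset.sum_congr rfl fun j _ => ?_
  simp only [zsmul_eq_mul, nsmul_eq_mul, mul_one]
  push_cast
  ring

theorem rcentralBell_eq_sum_cdiff (n r : ℕ) (x : ℝ) :
    rcentralBell r n x =
      ∑ k ∈ Finset.range (n + 1),
        x ^ k * ((1 / (Nat.factorial k : ℝ)) * (cdiff^[k] (fun y : ℝ => y ^ n)) (r : ℝ)) := by
  refine Finset.sum_congr rfl fun k _ => ?_
  rw [rcentralT, cdiff_iterate_pow_apply, mul_comm]
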